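/- arXiv:1805.03335 — 3 statements merged into one kernel-verified Lean document; each statement's English description precedes it below -/
import Mathlib

section
/- For every k ≥ 0, the perfect domination number of the (8k+5)×3 knights graph is at most 10k+6. -/
def knightAdj (p q : ℤ × ℤ) : Prop :=
  (|p.1 - q.1| = 1 ∧ |p.2 - q.2| = 2) ∨ (|p.1 - q.1| = 2 ∧ |p.2 - q.2| = 1)

lemma knightAdj_symm {p q : ℤ × ℤ} (h : knightAdj p q) : knightAdj q p := by
  unfold knightAdj at *
  rcases h with ⟨h1, h2⟩ | ⟨h1, h2⟩
  · left; rw [abs_sub_comm, abs_sub_comm q.2]; exact ⟨h1, h2⟩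
  · right; rw [abs_sub_comm, abs_sub_comm q.2]; exact ⟨h1, h2⟩

lemma knightAdj_irrefl (p : ℤ × ℤ) : ¬ knightAdj p p := by
  unfold knightAdj; simp

/-- The knights graph on an `n`-column, `m`-row chessboard. -/
def KN (n m : ℕ) : SimpleGraph (Fin n × Fin m) where
  Adj p q := knightAdj ((p.1 : ℤ), (p.2 : ℤ)) ((q.1 : ℤ), (q.2 : ℤ))
  symm := ⟨fun _ _ h => knightAdj_symm h⟩
  loopless := ⟨fun p => knightAdj_irrefl _⟩

/-- The infinite knights graph on `ℤ × ℤ`. -/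
def KNZZ : SimpleGraph (ℤ × ℤ) where
  Adj := knightAdj
  symm := ⟨fun _ _ h => knightAdj_symm h⟩
  loopless := ⟨knightAdj_irrefl⟩

/-- The quarter-infinite knights graph on `ℕ × ℕ`. -/
def KNNN : SimpleGraph (ℕ × ℕ) where
  Adj p q := knightAdj ((p.1 : ℤ), (p.2 : ℤ)) ((q.1 : ℤ), (q.2 : ℤ))
  symm := ⟨fun _ _ h => knightAdj_symm h⟩
  loopless := ⟨fun p => knightAdj_irrefl _⟩

/-- The half-plane knights graph on `ℤ × ℕ`. -/
def KNZN : SimpleGraph (ℤ × ℕ) where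
  Adj p q := knightAdj (p.1, (p.2 : ℤ)) (q.1, (q.2 : ℤ))
  symm := ⟨fun _ _ h => knightAdj_symm h⟩
  loopless := ⟨fun p => knightAdj_irrefl _⟩

/-- `S` is a perfect dominating set of `G`: every vertex not in `S` is adjacent to
exactly one vertex of `S`. -/
def IsPerfDomSet {V : Type*} (G : SimpleGraph V) (S : Set V) : Prop :=
  ∀ v ∉ S, ∃! u, u ∈ S ∧ G.Adj v u

/-- The perfect domination number of `G`. -/
noncomputable def perfDomNum {V : Type*} (G : SimpleGraph V) : ℕ :=
  sInf {k | ∃ S : Set V, IsPerfDomSet G S ∧ S.ncard = k}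


/-! The dominating set is the 8-periodic pattern with 10 knights per period, in rows
`{0,2}, {0}, {1,2}, {0}, {0,1,2}, ∅, {1}` of the columns `≡ 1, …, 7 (mod 8)`, except that the last
column `8k+4` holds only `(8k+4, 2)`. Since a knight's move shifts the column by at most 2, the
unique knight attacking a free square is determined by its column modulo 8, up to a few exceptions
at the right edge. The count is `10k` for the full periods, `5` for the columns `8k, …, 8k+3` and
`1` for the last column. -/

open Finset

lemma KNNN_adj_iff {a b c d : ℕ} :
    KNNN.Adj (a, b) (c, d) ↔
      ((a + 1 = c ∨ c + 1 = a) ∧ (b = d + 2 ∨ d = b + 2)) ∨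
        ((a + 2 = c ∨ c + 2 = a) ∧ (b = d + 1 ∨ d = b + 1)) := by
  have abs_eq_one (x : ℤ) : |x| = 1 ↔ x = 1 ∨ x = -1 := abs_eq zero_le_one
  have abs_eq_two (x : ℤ) : |x| = 2 ↔ x = 2 ∨ x = -2 := abs_eq zero_le_two
  simp only [KNNN, knightAdj, abs_eq_one, abs_eq_two]
  omega

lemma isPerfDomSet_KN_of_existsUnique {n m : ℕ} (P : ℕ × ℕ → Prop)
    (h : ∀ v : ℕ × ℕ, v.1 < n → v.2 < m → ¬ P v →
      ∃! u : ℕ × ℕ, (u.1 < n ∧ u.2 < m) ∧ P u ∧ KNNN.Adj v u) :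
    IsPerfDomSet (KN n m) {p | P (p.1, p.2)} := by
  intro v hv
  obtain ⟨u, ⟨⟨hu₁, hu₂⟩, hPu, hvu⟩, hunique⟩ := h (v.1, v.2) v.1.2 v.2.2 hv
  refine ⟨(⟨u.1, hu₁⟩, ⟨u.2, hu₂⟩), ⟨hPu, hvu⟩, ?_⟩
  rintro w ⟨hPw, hvw⟩
  obtain rfl := hunique (w.1, w.2) ⟨⟨w.1.2, w.2.2⟩, hPw, hvw⟩
  rfl

lemma ncard_KN_setOf {n m : ℕ} (P : ℕ × ℕ → Prop) [DecidablePred P] :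
    {p : Fin n × Fin m | P (p.1, p.2)}.ncard = ∑ a ∈ range n, #{b ∈ range m | P (a, b)} := by
  rw [Set.ncard_eq_toFinset_card', Set.toFinset_ofPred, card_filter, Fintype.sum_prod_type,
    ← Fin.sum_univ_eq_sum_range (fun a => #{b ∈ range m | P (a, b)})]
  refine sum_congr rfl fun a _ => ?_
  rw [card_filter, ← Fin.sum_univ_eq_sum_range (fun b => if P (a, b) then 1 else 0)]

lemma sum_range_mul_of_periodic {M : Type*} [AddCommMonoid M] {f : ℕ → M} {p : ℕ}
    (hf : Function.Periodic f p) (k : ℕ) :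
    ∑ a ∈ range (p * k), f a = k • ∑ a ∈ range p, f a := by
  induction k with
  | zero => simp
  | succ k ih =>
    rw [Nat.mul_succ, sum_range_add, ih, succ_nsmul]
    congr 1
    refine sum_congr rfl fun a _ => ?_
    simpa [add_comm, mul_comm] using (hf.nat_mul k) a

def InPeriodicPattern (v : ℕ × ℕ) : Prop :=
  (v.1 % 8 = 1 ∧ v.2 ≠ 1) ∨ (v.1 % 8 = 2 ∧ v.2 = 0) ∨ (v.1 % 8 = 3 ∧ v.2 ≠ 0) ∨
    (v.1 % 8 = 4 ∧ v.2 = 0) ∨ v.1 % 8 = 5 ∨ (v.1 % 8 = 7 ∧ v.2 = 1)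

instance : DecidablePred InPeriodicPattern := fun _ => by
  unfold InPeriodicPattern; infer_instance

def InPattern (k : ℕ) (v : ℕ × ℕ) : Prop :=
  (v.1 = 8 * k + 4 ∧ v.2 = 2) ∨ (v.1 ≠ 8 * k + 4 ∧ InPeriodicPattern v)

instance (k : ℕ) : DecidablePred (InPattern k) := fun _ => by
  unfold InPattern; infer_instance

lemma periodic_card_inPeriodicPattern (m : ℕ) :
    Function.Periodic (fun a => #{b ∈ range m | InPeriodicPattern (a, b)}) 8 := by
  intro a
  simp only [InPeriodicPattern, Nat.add_mod_right]

lemma card_inPattern (k : ℕ) :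
    ∑ a ∈ range (8 * k + 5), #{b ∈ range 3 | InPattern k (a, b)} = 10 * k + 6 := by
  set c := fun a => #{b ∈ range 3 | InPeriodicPattern (a, b)}
  have hc_periodic : Function.Periodic c 8 := periodic_card_inPeriodicPattern 3
  have last_column : #{b ∈ range 3 | InPattern k (8 * k + 4, b)} = 1 := by
    simp [InPattern]
  have other_columns : ∀ a ∈ range (8 * k + 4), #{b ∈ range 3 | InPattern k (a, b)} = c a := by
    intro a ha
    have : a ≠ 8 * k + 4 := (mem_range.1 ha).ne
    exact congrArg card (filter_congr fun b _ => by simp [InPattern, this])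
  have shifted_column (x : ℕ) : c (8 * k + x) = c x := by
    simpa [add_comm, mul_comm] using (hc_periodic.nat_mul k) x
  have full_period : ∑ a ∈ range 8, c a = 10 := by decide
  have first_four_columns : ∑ a ∈ range 4, c a = 5 := by decide
  rw [sum_range_succ, last_column, sum_congr rfl other_columns, sum_range_add,
    sum_range_mul_of_periodic hc_periodic, sum_congr rfl fun x _ => shifted_column x, full_period,
    first_four_columns, smul_eq_mul]
  ring

def dominator (k a b : ℕ) : ℕ × ℕ :=
  if a = 8 * k + 4 then (if b = 0 then (a - 1, 2) else (a - 2, 0))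
  else if a % 8 = 0 then (if b = 0 then (a + 1, 2) else if b = 1 then (a + 2, 0) else (a + 1, 0))
  else if a % 8 = 1 then (a + 2, 2)
  else if a % 8 = 2 then
    (if b = 1 then (if a = 8 * k + 2 then (a + 2, 2) else (a + 2, 0)) else (a - 1, 0))
  else if a % 8 = 3 then (if a = 8 * k + 3 then (a + 1, 2) else (a + 2, 1))
  else if a % 8 = 4 then (if b = 1 then (a - 2, 0) else (a + 1, 0))
  else if a % 8 = 6 then (if b = 0 then (a - 1, 2) else if b = 1 then (a - 2, 0) else (a - 1, 0))
  else (a - 2, 1)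

lemma dominator_spec {k a b : ℕ} (ha : a < 8 * k + 5) (hb : b < 3) (h : ¬ InPattern k (a, b)) :
    let u := dominator k a b
    (u.1 < 8 * k + 5 ∧ u.2 < 3) ∧ InPattern k u ∧ KNNN.Adj (a, b) u := by
  unfold dominator
  split_ifs <;>
    simp only [InPattern, InPeriodicPattern, KNNN_adj_iff, true_or, true_and, and_true] at h ⊢ <;>
    omega

lemma eq_dominator {k a b : ℕ} (ha : a < 8 * k + 5) (hb : b < 3) (h : ¬ InPattern k (a, b))
    {u : ℕ × ℕ} (hu : (u.1 < 8 * k + 5 ∧ u.2 < 3) ∧ InPattern k u ∧ KNNN.Adj (a, b) u) :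
    u = dominator k a b := by
  obtain ⟨c, d⟩ := u
  simp only [InPattern, InPeriodicPattern, KNNN_adj_iff] at h hu
  unfold dominator
  split_ifs <;> simp only [Prod.mk.injEq] <;> omega

theorem stmt5 (k : ℕ) : perfDomNum (KN (8 * k + 5) 3) ≤ 10 * k + 6 := by
  refine Nat.sInf_le ⟨{p | InPattern k (p.1, p.2)}, ?_, ?_⟩
  · exact isPerfDomSet_KN_of_existsUnique _ fun v ha hb h =>
      ⟨dominator k v.1 v.2, dominator_spec ha hb h, fun _ hu => eq_dominator ha hb h hu⟩
  · rw [ncard_KN_setOf, card_inPattern]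
end

section
/- For every k ≥ 0, the perfect domination number of the (8k+6)×3 knights graph is at most 10k+7. -/
/-!
Along the side of length `8k + 6` (the first coordinate), the perfect dominating set consists
of `k` copies of a 10-cell block of width 8 followed by a 7-cell tail of width 6. Whether a
vertex is perfectly dominated only depends on the set in the columns at distance at most 2 from
it. So for the pattern with `k + 1` blocks, a vertex in column `≥ 10` behaves like its translate
by 8 columns in the pattern with `k` blocks, and a vertex in column `< 10` behaves like the same
vertex in the pattern with one block (all patterns with at least one block agree on their first
12 columns). This reduces the claim to the boards with `k = 0` and `k = 1`, which are checked
exhaustively.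
-/

open Finset

section PerfectDomination

variable {V W : Type*} {G : SimpleGraph V} {H : SimpleGraph W}

def IsPerfDomAt (G : SimpleGraph V) (S : Set V) (v : V) : Prop :=
  v ∈ S ∨ ∃! u, u ∈ S ∧ G.Adj v u

lemma perfDomNum_le_ncard {S : Set V} (h : IsPerfDomSet G S) : perfDomNum G ≤ S.ncard :=
  Nat.sInf_le ⟨S, h, rfl⟩

lemma isPerfDomAt_congr {S T : Set V} {v : V} (h : ∀ u, u = v ∨ G.Adj v u → (u ∈ S ↔ u ∈ T)) :
    IsPerfDomAt G S v ↔ IsPerfDomAt G T v := by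
  unfold IsPerfDomAt
  rw [h v (Or.inl rfl)]
  refine or_congr_right (existsUnique_congr fun u => ?_)
  exact ⟨fun ⟨hu, hvu⟩ => ⟨(h u (Or.inr hvu)).1 hu, hvu⟩,
    fun ⟨hu, hvu⟩ => ⟨(h u (Or.inr hvu)).2 hu, hvu⟩⟩

lemma isPerfDomAt_image_iff (φ : G ≃g H) (S : Set V) (v : V) :
    IsPerfDomAt H (φ '' S) (φ v) ↔ IsPerfDomAt G S v := by
  unfold IsPerfDomAt
  rw [φ.injective.mem_set_image]
  exact or_congr_right (φ.toEquiv.existsUnique_congr fun u =>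
    (and_congr φ.injective.mem_set_image φ.map_adj_iff).symm).symm

lemma isPerfDomAt_coe_finset_iff [DecidableRel G.Adj] (S : Finset V) (v : V) :
    IsPerfDomAt G S v ↔ v ∈ S ∨ #(S.filter (G.Adj v)) = 1 := by
  simp only [IsPerfDomAt, card_eq_one_iff_existsUnique, mem_filter, mem_coe]

lemma isPerfDomSet_preimage (f : G ↪g H) {S : Set W} (hS : S ⊆ Set.range f)
    (h : ∀ v, IsPerfDomAt H S (f v)) : IsPerfDomSet G (f ⁻¹' S) := by
  intro v hv
  obtain ⟨u, ⟨huS, hvu⟩, huniq⟩ := (h v).resolve_left hv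
  obtain ⟨w, rfl⟩ := hS huS
  refine ⟨w, ⟨huS, f.map_adj_iff.1 hvu⟩, fun w' ⟨hw'S, hvw'⟩ => f.injective ?_⟩
  exact huniq (f w') ⟨hw'S, f.map_adj_iff.2 hvw'⟩

end PerfectDomination

lemma abs_fst_sub_le_two_of_knightAdj {p q : ℤ × ℤ} (h : knightAdj p q) : |p.1 - q.1| ≤ 2 := by
  rcases h with ⟨h, -⟩ | ⟨h, -⟩ <;> simp [h]

lemma KNZZ.isPerfDomAt_congr {S T : Set (ℤ × ℤ)} {p : ℤ × ℤ}
    (h : ∀ u : ℤ × ℤ, |p.1 - u.1| ≤ 2 → (u ∈ S ↔ u ∈ T)) :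
    IsPerfDomAt KNZZ S p ↔ IsPerfDomAt KNZZ T p := by
  refine _root_.isPerfDomAt_congr fun u hu => h u ?_
  rcases hu with rfl | hu
  · simp
  · exact abs_fst_sub_le_two_of_knightAdj hu

instance : DecidableRel KNZZ.Adj := fun p q => by
  dsimp only [KNZZ, knightAdj]
  infer_instance

def KNZZ.translate (t : ℤ × ℤ) : KNZZ ≃g KNZZ where
  toEquiv := Equiv.addRight t
  map_rel_iff' {p q} := by
    simp only [KNZZ, knightAdj, Equiv.coe_addRight, Prod.fst_add, Prod.snd_add,
      add_sub_add_right_eq_sub]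

def KN.embedding (n m : ℕ) : KN n m ↪g KNZZ where
  toFun v := ((v.1 : ℤ), (v.2 : ℤ))
  inj' v w h := by
    simp only [Prod.mk.injEq, Nat.cast_inj] at h
    exact Prod.ext (Fin.ext h.1) (Fin.ext h.2)
  map_rel_iff' := Iff.rfl

lemma KN.range_embedding (n m : ℕ) :
    Set.range (KN.embedding n m) = ↑(Ico (0 : ℤ) n ×ˢ Ico (0 : ℤ) m) := by
  ext ⟨c, r⟩
  simp only [Set.mem_range, coe_product, coe_Ico, Set.mem_prod, Set.mem_Ico]
  constructor
  · rintro ⟨⟨a, b⟩, hv⟩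
    obtain ⟨rfl, rfl⟩ := Prod.mk.inj hv
    omega
  · rintro ⟨⟨hc0, hc⟩, hr0, hr⟩
    refine ⟨(⟨c.toNat, by omega⟩, ⟨r.toNat, by omega⟩), ?_⟩
    exact Prod.ext (Int.toNat_of_nonneg hc0) (Int.toNat_of_nonneg hr0)

def knightBlock : Finset (ℤ × ℤ) :=
  {(1, 0), (1, 2), (2, 0), (3, 1), (3, 2), (4, 0), (5, 0), (5, 1), (5, 2), (7, 1)}

def knightTail : Finset (ℤ × ℤ) :=
  {(1, 0), (1, 2), (2, 0), (3, 1), (3, 2), (4, 2), (5, 0)}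

def knightPattern : ℕ → Finset (ℤ × ℤ)
  | 0 => knightTail
  | k + 1 => knightBlock ∪ (knightPattern k).map (Equiv.addRight (8, 0)).toEmbedding

lemma mem_knightPattern_succ_iff {k : ℕ} {u : ℤ × ℤ} :
    u ∈ knightPattern (k + 1) ↔ u ∈ knightBlock ∨ u - (8, 0) ∈ knightPattern k := by
  simp only [knightPattern, mem_union, mem_map_equiv, Equiv.addRight_symm, Equiv.coe_addRight,
    sub_eq_add_neg]

lemma fst_lt_eight_of_mem_knightBlock : ∀ u ∈ knightBlock, u.1 < 8 := by
  decide

lemma knightPattern_subset (k : ℕ) :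
    knightPattern k ⊆ Ico (0 : ℤ) (8 * k + 6) ×ˢ Ico (0 : ℤ) 3 := by
  induction k with
  | zero => decide
  | succ k ih =>
    intro u hu
    have hblock : knightBlock ⊆ Ico (0 : ℤ) 8 ×ˢ Ico (0 : ℤ) 3 := by decide
    rcases mem_knightPattern_succ_iff.1 hu with hu | hu
    · have := hblock hu
      simp only [mem_product, mem_Ico] at this ⊢
      omega
    · have := ih hu
      simp only [mem_product, mem_Ico, Prod.fst_sub, Prod.snd_sub] at this ⊢
      omega

lemma card_knightPattern (k : ℕ) : #(knightPattern k) = 10 * k + 7 := by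
  induction k with
  | zero => rfl
  | succ k ih =>
    have hdisj :
        Disjoint knightBlock ((knightPattern k).map (Equiv.addRight (8, 0)).toEmbedding) := by
      rw [disjoint_left]
      intro u hblock hshift
      have hb := fst_lt_eight_of_mem_knightBlock u hblock
      obtain ⟨w, hw, rfl⟩ := mem_map.1 hshift
      have := mem_product.1 (knightPattern_subset k hw)
      simp only [mem_Ico, Equiv.coe_toEmbedding, Equiv.coe_addRight, Prod.fst_add] at this hb
      omega
    have hblock : #knightBlock = 10 := rfl
    rw [knightPattern, card_union_of_disjoint hdisj, card_map, ih, hblock]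
    ring

lemma mem_knightPattern_iff_mem_knightTail {k : ℕ} {u : ℤ × ℤ} (hu : u.1 < 4) :
    u ∈ knightPattern k ↔ u ∈ knightTail := by
  cases k with
  | zero => rfl
  | succ k =>
    have hagree : knightBlock.filter (·.1 < 4) = knightTail.filter (·.1 < 4) := by decide
    have hshift : u - (8, 0) ∉ knightPattern k := fun h => by
      have := mem_product.1 (knightPattern_subset k h)
      simp only [mem_Ico, Prod.fst_sub] at this
      omega
    rw [mem_knightPattern_succ_iff, or_iff_left hshift]
    simpa [hu] using congrArg (u ∈ ·) hagree

lemma mem_knightPattern_succ_iff_mem_knightPattern_one {k : ℕ} {u : ℤ × ℤ} (hu : u.1 < 12) :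
    u ∈ knightPattern (k + 1) ↔ u ∈ knightPattern 1 := by
  have hu' : (u - (8, 0)).1 < 4 := by simp only [Prod.fst_sub]; omega
  rw [mem_knightPattern_succ_iff, mem_knightPattern_succ_iff,
    mem_knightPattern_iff_mem_knightTail hu', mem_knightPattern_iff_mem_knightTail hu']

lemma isPerfDomAt_knightPattern_zero :
    ∀ p ∈ Ico (0 : ℤ) 6 ×ˢ Ico (0 : ℤ) 3, IsPerfDomAt KNZZ (knightPattern 0) p := by
  simp only [isPerfDomAt_coe_finset_iff]
  decide

lemma isPerfDomAt_knightPattern_one :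
    ∀ p ∈ Ico (0 : ℤ) 14 ×ˢ Ico (0 : ℤ) 3, IsPerfDomAt KNZZ (knightPattern 1) p := by
  simp only [isPerfDomAt_coe_finset_iff]
  decide

lemma isPerfDomAt_knightPattern_succ_iff_one_of_lt {k : ℕ} {p : ℤ × ℤ} (hp : p.1 < 10) :
    IsPerfDomAt KNZZ (knightPattern (k + 1)) p ↔ IsPerfDomAt KNZZ (knightPattern 1) p :=
  KNZZ.isPerfDomAt_congr fun u hu => by
    have := abs_le.1 hu
    exact mem_knightPattern_succ_iff_mem_knightPattern_one (by omega)

lemma isPerfDomAt_knightPattern_succ_iff_of_le {k : ℕ} {p : ℤ × ℤ} (hp : 10 ≤ p.1) :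
    IsPerfDomAt KNZZ (knightPattern (k + 1)) p ↔
      IsPerfDomAt KNZZ (knightPattern k) (p - (8, 0)) := by
  rw [← isPerfDomAt_image_iff (KNZZ.translate (8, 0)) _ (p - (8, 0)),
    show KNZZ.translate (8, 0) (p - (8, 0)) = p from sub_add_cancel p (8, 0)]
  refine KNZZ.isPerfDomAt_congr fun u hu => ?_
  have hblock : u ∉ knightBlock := fun h => by
    have := fst_lt_eight_of_mem_knightBlock u h
    have := abs_le.1 hu
    omega
  rw [knightPattern, coe_union, coe_map, Set.mem_union, mem_coe, or_iff_right hblock]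
  rfl

lemma isPerfDomAt_knightPattern (k : ℕ) :
    ∀ p ∈ Ico (0 : ℤ) (8 * k + 6) ×ˢ Ico (0 : ℤ) 3, IsPerfDomAt KNZZ (knightPattern k) p := by
  induction k with
  | zero => exact isPerfDomAt_knightPattern_zero
  | succ k ih =>
    intro p hp
    simp only [mem_product, mem_Ico] at hp
    push_cast at hp
    rcases lt_or_ge p.1 10 with hp10 | hp10
    · rw [isPerfDomAt_knightPattern_succ_iff_one_of_lt hp10]
      exact isPerfDomAt_knightPattern_one p (by simp only [mem_product, mem_Ico]; omega)
    · rw [isPerfDomAt_knightPattern_succ_iff_of_le hp10]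
      exact ih _ (by simp only [mem_product, mem_Ico, Prod.fst_sub, Prod.snd_sub]; omega)

theorem stmt6 (k : ℕ) : perfDomNum (KN (8 * k + 6) 3) ≤ 10 * k + 7 := by
  set f := KN.embedding (8 * k + 6) 3
  have hrange : ↑(knightPattern k) ⊆ Set.range f := by
    rw [KN.range_embedding]
    exact_mod_cast knightPattern_subset k
  have hdom : IsPerfDomSet (KN (8 * k + 6) 3) (f ⁻¹' knightPattern k) :=
    isPerfDomSet_preimage f hrange fun v =>
      isPerfDomAt_knightPattern k _ (by exact_mod_cast (KN.range_embedding _ _).le ⟨v, rfl⟩)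
  calc perfDomNum (KN (8 * k + 6) 3) ≤ (f ⁻¹' knightPattern k).ncard := perfDomNum_le_ncard hdom
    _ = 10 * k + 7 := by
      rw [Set.ncard_preimage_of_injective_subset_range f.injective hrange, Set.ncard_coe_finset,
        card_knightPattern]
end

section
/- For every k ≥ 0, the perfect domination number of the (8k+7)×3 knights graph is at most 10k+9. -/
/-!
Take the set of squares of the 8-periodic pattern (columns counted from `0`)
```
row 2 :  . X . X . X . .
row 1 :  . . . X . X . X
row 0 :  . X X . X X . .
```
Each block of eight columns contains `10` of its squares and the first seven columns of a block
contain `9`, so on a board with `8 k + 7` columns it has `10 k + 9` squares. A case analysis on the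
column modulo `8` shows that every other square is attacked by exactly one square of the pattern:
the attacker we name for it always lies on the board, since the board starts with a column of
residue `0` and ends with one of residue `6`.
-/

lemma perfDomNum_le {V : Type*} {G : SimpleGraph V} {S : Set V} (hS : IsPerfDomSet G S) :
    perfDomNum G ≤ S.ncard :=
  Nat.sInf_le ⟨S, hS, rfl⟩

lemma knightAdj_natCast_iff (a b c d : ℕ) :
    knightAdj ((a : ℤ), (b : ℤ)) ((c : ℤ), (d : ℤ)) ↔
      ((a + 1 = c ∨ c + 1 = a) ∧ (b + 2 = d ∨ d + 2 = b)) ∨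
        ((a + 2 = c ∨ c + 2 = a) ∧ (b + 1 = d ∨ d + 1 = b)) := by
  simp only [knightAdj, abs_eq (zero_le_one' ℤ), abs_eq (zero_le_two : (0 : ℤ) ≤ 2)]
  omega

lemma isPerfDomSet_KN_setOf {n m : ℕ} {P : ℕ → ℕ → Prop}
    (h : ∀ a < n, ∀ b < m, ¬ P a b → ∃! c : ℕ × ℕ,
      (c.1 < n ∧ c.2 < m ∧ P c.1 c.2) ∧ knightAdj ((a : ℤ), (b : ℤ)) ((c.1 : ℤ), (c.2 : ℤ))) :
    IsPerfDomSet (KN n m) {v | P v.1 v.2} := by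
  intro v hv
  obtain ⟨⟨c, d⟩, ⟨⟨hc, hd, hP⟩, hadj⟩, huniq⟩ := h v.1 v.1.2 v.2 v.2.2 hv
  refine ⟨(⟨c, hc⟩, ⟨d, hd⟩), ⟨hP, hadj⟩, ?_⟩
  rintro ⟨c', d'⟩ ⟨hP', hadj'⟩
  simpa [Prod.ext_iff, Fin.ext_iff] using huniq (c', d') ⟨⟨c'.2, d'.2, hP'⟩, hadj'⟩

lemma ncard_setOf_fin_prod {n m : ℕ} (P : ℕ → ℕ → Prop) [∀ a, DecidablePred (P a)] :
    {v : Fin n × Fin m | P v.1 v.2}.ncard =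
      ∑ a ∈ Finset.range n, (Finset.filter (P a) (Finset.range m)).card := by
  rw [Set.ncard_eq_toFinset_card', Set.toFinset_ofPred, Finset.card_filter, Fintype.sum_prod_type]
  simp only [Finset.card_filter, ← Fin.sum_univ_eq_sum_range]

def InKnightPattern (a b : ℕ) : Prop :=
  (a % 8 = 1 ∧ (b = 0 ∨ b = 2)) ∨ (a % 8 = 2 ∧ b = 0) ∨ (a % 8 = 3 ∧ (b = 1 ∨ b = 2)) ∨
    (a % 8 = 4 ∧ b = 0) ∨ (a % 8 = 5 ∧ b ≤ 2) ∨ (a % 8 = 7 ∧ b = 1)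

instance (a : ℕ) : DecidablePred (InKnightPattern a) := fun b => by
  unfold InKnightPattern; infer_instance

lemma inKnightPattern_add_eight_mul (a k : ℕ) :
    InKnightPattern (a + 8 * k) = InKnightPattern a := by
  ext b
  simp only [InKnightPattern, Nat.add_mul_mod_self_left]

/-- Off the pattern, the square of the pattern attacking `(a, b)`; its values on the pattern
are irrelevant. -/
def knightPatternAttacker (a b : ℕ) : ℕ × ℕ :=
  match a % 8, b with
  | 0, 0 => (a + 1, 2)
  | 0, 1 => (a + 2, 0)
  | 0, _ => (a + 1, 0)
  | 1, _ => (a + 2, 2)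
  | 2, 1 => (a + 2, 0)
  | 2, _ => (a - 1, 0)
  | 3, _ => (a + 2, 1)
  | 4, 1 => (a - 2, 0)
  | 4, _ => (a + 1, 0)
  | 6, 0 => (a - 1, 2)
  | 6, 1 => (a - 2, 0)
  | 6, _ => (a - 1, 0)
  | _, _ => (a - 2, 1)

lemma existsUnique_inKnightPattern_knightAdj (k : ℕ) {a b : ℕ} (ha : a < 8 * k + 7) (hb : b < 3)
    (h : ¬ InKnightPattern a b) :
    ∃! c : ℕ × ℕ, (c.1 < 8 * k + 7 ∧ c.2 < 3 ∧ InKnightPattern c.1 c.2) ∧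
      knightAdj ((a : ℤ), (b : ℤ)) ((c.1 : ℤ), (c.2 : ℤ)) := by
  obtain ⟨q, r, hr, rfl⟩ : ∃ q r, r < 8 ∧ a = r + 8 * q :=
    ⟨a / 8, a % 8, Nat.mod_lt a (by norm_num), (Nat.mod_add_div a 8).symm⟩
  rw [inKnightPattern_add_eight_mul] at h
  simp only [knightAdj_natCast_iff]
  refine ⟨knightPatternAttacker (r + 8 * q) b, ?_, fun ⟨c, d⟩ ⟨⟨hc, hd, hP⟩, hadj⟩ => ?_⟩
  · interval_cases r <;> interval_cases b <;>
      simp [InKnightPattern, knightPatternAttacker] at h ⊢ <;> omega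
  · dsimp only [InKnightPattern] at hc hd hP hadj
    interval_cases r <;> interval_cases b <;>
      simp [InKnightPattern, knightPatternAttacker] at h ⊢ <;> omega

lemma sum_card_inKnightPattern (k : ℕ) :
    ∑ a ∈ Finset.range (8 * k + 7), (Finset.filter (InKnightPattern a) (Finset.range 3)).card =
      10 * k + 9 := by
  induction k with
  | zero => decide
  | succ k ih =>
    have hblock : ∀ x, Finset.filter (InKnightPattern (8 * k + 7 + x)) (Finset.range 3) =
        Finset.filter (InKnightPattern (7 + x)) (Finset.range 3) := fun x => by
      simp only [show 8 * k + 7 + x = 7 + x + 8 * k by ring, inKnightPattern_add_eight_mul]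
    have hsum :
        ∑ x ∈ Finset.range 8, (Finset.filter (InKnightPattern (7 + x)) (Finset.range 3)).card = 10 := by
      decide
    rw [show 8 * (k + 1) + 7 = 8 * k + 7 + 8 by ring, Finset.sum_range_add, ih]
    simp only [hblock, hsum]
    ring

theorem stmt7 (k : ℕ) : perfDomNum (KN (8 * k + 7) 3) ≤ 10 * k + 9 := by
  calc perfDomNum (KN (8 * k + 7) 3)
      ≤ {v : Fin (8 * k + 7) × Fin 3 | InKnightPattern v.1 v.2}.ncard :=
        perfDomNum_le <| isPerfDomSet_KN_setOf fun _ ha _ hb h =>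
          existsUnique_inKnightPattern_knightAdj k ha hb h
    _ = 10 * k + 9 := by
        rw [ncard_setOf_fin_prod, sum_card_inKnightPattern]
end
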